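/- Let ρ be a d×d density matrix with spectral decomposition ρ = ∑_{k=1}^{d} λ_k |e_k⟩⟨e_k| in which every eigenvalue λ_k is strictly positive, let δ > 0, let n ≥ 1, and set c = ∑_{k=1}^{d} |log₂ λ_k|. Let Π_{ρ,δ} = ∑_{k₁ⁿ ∈ T^n_{λ,δ}} |e_{k₁}⟩⟨e_{k₁}| ⊗ ⋯ ⊗ |e_{kₙ}⟩⟨e_{kₙ}| be the typical projector. Then, in the Loewner order, 2^{−n(S(ρ)+cδ)} Π_{ρ,δ} ≤ Π_{ρ,δ} ρ^{⊗n} Π_{ρ,δ} ≤ 2^{−n(S(ρ)−cδ)} Π_{ρ,δ}. -/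

import Mathlib

open scoped Classical ComplexOrder Matrix

/-- Von Neumann entropy (base 2) of a matrix: `-∑ λᵢ log₂ λᵢ` over its eigenvalues
(defined to be `0` if the matrix is not Hermitian). -/
noncomputable def vnEntropy {m : Type*} [Fintype m] [DecidableEq m]
    (ρ : Matrix m m ℂ) : ℝ :=
  if h : ρ.IsHermitian then -∑ i, h.eigenvalues i * Real.logb 2 (h.eigenvalues i) else 0

/-- Loewner order on Hermitian matrices: `A ≤ B` iff `B - A` is positive semidefinite. -/
def loewnerLE {m : Type*} [Fintype m] (A B : Matrix m m ℂ) : Prop :=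
  (B - A).PosSemidef

/-- The typical set `T^n_{p,δ}`: words `w` of length `n` such that for every letter `x`,
`|N(x|w) − n p(x)| ≤ n δ`, where `N(x|w)` counts the occurrences of `x` in `w`. -/
noncomputable def typicalSet {X : Type*} [Fintype X] [DecidableEq X]
    (p : X → ℝ) (n : ℕ) (δ : ℝ) : Finset (Fin n → X) :=
  Finset.univ.filter fun w => ∀ x : X,
    |((Finset.univ.filter fun i => w i = x).card : ℝ) - n * p x| ≤ n * δ

/-- The `n`-fold tensor (Kronecker) power of a matrix. -/
noncomputable def tensorPow {X : Type*} [Fintype X] (ρ : Matrix X X ℂ) (n : ℕ) :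
    Matrix (Fin n → X) (Fin n → X) ℂ :=
  Matrix.of fun a b => ∏ i, ρ (a i) (b i)

/-- The family `e` is an orthonormal system of vectors. -/
def OrthonormalFamily {X : Type*} [Fintype X] [DecidableEq X] (e : X → X → ℂ) : Prop :=
  ∀ k l, (∑ a, (starRingEnd ℂ) (e k a) * e l a) = if k = l then 1 else 0

/-- The typical projector `Π_{ρ,δ} = ∑_{k₁ⁿ ∈ T^n_{λ,δ}} |e_{k₁}⟩⟨e_{k₁}| ⊗ ⋯ ⊗ |e_{kₙ}⟩⟨e_{kₙ}|`
associated with the eigenbasis `e` and eigenvalue distribution `lam`. -/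
noncomputable def typicalProj {X : Type*} [Fintype X] [DecidableEq X]
    (e : X → X → ℂ) (lam : X → ℝ) (n : ℕ) (δ : ℝ) :
    Matrix (Fin n → X) (Fin n → X) ℂ :=
  ∑ f ∈ typicalSet lam n δ, Matrix.of fun a b =>
    (∏ i, e (f i) (a i)) * ∏ i, (starRingEnd ℂ) (e (f i) (b i))

/-! ### Auxiliary definitions and lemmas -/

open Matrix Finset

/-- Tensor product basis vector. -/
noncomputable def tvec {d n : ℕ} (e : Fin d → Fin d → ℂ) (f : Fin n → Fin d) :
    (Fin n → Fin d) → ℂ := fun a => ∏ i, e (f i) (a i)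

/-- Rank-one projector onto a tensor product basis vector. -/
noncomputable def Pm {d n : ℕ} (e : Fin d → Fin d → ℂ) (f : Fin n → Fin d) :
    Matrix (Fin n → Fin d) (Fin n → Fin d) ℂ :=
  Matrix.of fun a b => tvec e f a * (starRingEnd ℂ) (tvec e f b)

theorem aux_psd_sum {ι m : Type*} [Fintype m] [DecidableEq m] (s : Finset ι) (v : ι → m → ℂ)
    (β : ι → ℝ) (hβ : ∀ f ∈ s, 0 ≤ β f) :
    Matrix.PosSemidef (∑ f ∈ s, (β f : ℂ) •
      Matrix.of (fun a b => v f a * (starRingEnd ℂ) (v f b))) := by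
  rw [Matrix.posSemidef_iff_dotProduct_mulVec]
  constructor
  · unfold Matrix.IsHermitian
    ext a b
    simp only [conjTranspose_apply, Matrix.sum_apply, Matrix.smul_apply, of_apply,
      smul_eq_mul, star_sum, star_mul', Complex.star_def, Complex.conj_ofReal,
      Complex.conj_conj]
    exact Finset.sum_congr rfl fun f _ => by ring
  · intro x
    have expand : star x ⬝ᵥ ((∑ f ∈ s, (β f : ℂ) •
        Matrix.of (fun a b => v f a * (starRingEnd ℂ) (v f b))) *ᵥ x)
        = ∑ f ∈ s, (β f : ℂ) *
            ((∑ a, v f a * (starRingEnd ℂ) (x a)) * (∑ b, (starRingEnd ℂ) (v f b) * x b)) := by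
      simp only [mulVec, dotProduct, Matrix.sum_apply, Matrix.smul_apply, of_apply,
        smul_eq_mul, Finset.mul_sum, Finset.sum_mul, Pi.star_apply, Complex.star_def]
      conv_lhs => enter [2, a]; rw [Finset.sum_comm]
      rw [Finset.sum_comm]
      refine Finset.sum_congr rfl fun f _ => ?_
      rw [Finset.sum_comm]
      exact Finset.sum_congr rfl fun b _ => Finset.sum_congr rfl fun a _ => by ring
    rw [expand]
    apply Finset.sum_nonneg
    intro f hf
    set z := ∑ b, (starRingEnd ℂ) (v f b) * x b with hz
    have hcz : (∑ a, v f a * (starRingEnd ℂ) (x a)) = (starRingEnd ℂ) z := by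
      rw [hz, map_sum]
      exact Finset.sum_congr rfl fun a _ => by simp [mul_comm]
    rw [hcz, mul_comm ((starRingEnd ℂ) z) z, Complex.mul_conj, ← Complex.ofReal_mul,
      Complex.zero_le_real]
    exact mul_nonneg (hβ f hf) (Complex.normSq_nonneg z)

theorem aux_scalar {X : Type*} [Fintype X] [DecidableEq X] (lam : X → ℝ) (hlam : ∀ k, 0 < lam k)
    (δ : ℝ) (n : ℕ) (f : Fin n → X) (hf : f ∈ typicalSet lam n δ) :
    (2:ℝ) ^ (-(n:ℝ) * ((-∑ k, lam k * Real.logb 2 (lam k)) + (∑ k, |Real.logb 2 (lam k)|) * δ))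
      ≤ ∏ i, lam (f i) ∧
    (∏ i, lam (f i)) ≤ (2:ℝ) ^ (-(n:ℝ) *
      ((-∑ k, lam k * Real.logb 2 (lam k)) - (∑ k, |Real.logb 2 (lam k)|) * δ)) := by
  classical
  set L : X → ℝ := fun k => Real.logb 2 (lam k) with hL
  set N : X → ℕ := fun k => (Finset.univ.filter fun i => f i = k).card with hN
  have hmem : ∀ x : X, |((N x : ℝ)) - n * lam x| ≤ n * δ := by
    have := (Finset.mem_filter.mp hf).2
    exact this
  have hp : 0 < ∏ i, lam (f i) := Finset.prod_pos (fun i _ => hlam (f i))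
  have hrw : ∏ i, lam (f i) = (2:ℝ) ^ (Real.logb 2 (∏ i, lam (f i))) :=
    (Real.rpow_logb two_pos (by norm_num) hp).symm
  have hlb : Real.logb 2 (∏ i, lam (f i)) = ∑ k, (N k : ℝ) * L k := by
    rw [Real.logb_prod _ _ (fun i _ => (hlam (f i)).ne')]
    rw [← Finset.sum_fiberwise' Finset.univ f (fun k => L k)]
    refine Finset.sum_congr rfl fun k _ => ?_
    rw [Finset.sum_const, nsmul_eq_mul]
  have key : |∑ k, ((N k : ℝ) - n * lam k) * L k|
      ≤ (n:ℝ) * ((∑ k, |L k|) * δ) := by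
    calc |∑ k, ((N k : ℝ) - n * lam k) * L k| ≤ ∑ k, |((N k : ℝ) - n * lam k) * L k| :=
          Finset.abs_sum_le_sum_abs _ _
      _ ≤ ∑ k, ((n:ℝ) * δ) * |L k| := by
          refine Finset.sum_le_sum fun k _ => ?_
          rw [abs_mul]
          exact mul_le_mul_of_nonneg_right (hmem k) (abs_nonneg _)
      _ = (n:ℝ) * ((∑ k, |L k|) * δ) := by rw [← Finset.mul_sum]; ring
  have split : ∑ k, (N k : ℝ) * L k
      = (∑ k, ((N k : ℝ) - n * lam k) * L k) + (n:ℝ) * (∑ k, lam k * L k) := by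
    rw [Finset.mul_sum, ← Finset.sum_add_distrib]
    refine Finset.sum_congr rfl fun k _ => by ring
  obtain ⟨hlo, hhi⟩ := abs_le.mp key
  constructor
  · rw [hrw]
    apply (Real.rpow_le_rpow_left_iff one_lt_two).mpr
    rw [hlb, split]
    have e : -(n:ℝ) * ((-∑ k, lam k * L k) + (∑ k, |L k|) * δ)
        = (n:ℝ) * (∑ k, lam k * L k) - (n:ℝ) * ((∑ k, |L k|) * δ) := by ring
    rw [e]; linarith
  · rw [hrw]
    apply (Real.rpow_le_rpow_left_iff one_lt_two).mpr
    rw [hlb, split]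
    have e : -(n:ℝ) * ((-∑ k, lam k * L k) - (∑ k, |L k|) * δ)
        = (n:ℝ) * (∑ k, lam k * L k) + (n:ℝ) * ((∑ k, |L k|) * δ) := by ring
    rw [e]; linarith

theorem aux_det_conj {d : ℕ} (V M : Matrix (Fin d) (Fin d) ℂ) (hV : V * Vᴴ = 1) (t : ℂ) :
    Matrix.det (t • (1 : Matrix (Fin d) (Fin d) ℂ) - V * M * Vᴴ)
      = Matrix.det (t • (1 : Matrix (Fin d) (Fin d) ℂ) - M) := by
  have h1 : t • (1 : Matrix (Fin d) (Fin d) ℂ) - V * M * Vᴴ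
      = V * (t • (1 : Matrix (Fin d) (Fin d) ℂ) - M) * Vᴴ := by
    rw [Matrix.mul_sub, Matrix.sub_mul]
    congr 1
    rw [Matrix.mul_smul, Matrix.mul_one, Matrix.smul_mul, hV]
  rw [h1, Matrix.det_mul, Matrix.det_mul]
  have h2 : V.det * Vᴴ.det = 1 := by rw [← Matrix.det_mul, hV, Matrix.det_one]
  calc V.det * (t • (1:Matrix (Fin d) (Fin d) ℂ) - M).det * Vᴴ.det
      = (t • (1:Matrix (Fin d) (Fin d) ℂ) - M).det * (V.det * Vᴴ.det) := by ring
    _ = _ := by rw [h2, mul_one]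

theorem aux_multiset {d : ℕ} (lam mu : Fin d → ℝ)
    (h : ∀ t : ℂ, (∏ k, (t - (lam k : ℂ))) = ∏ i, (t - (mu i : ℂ))) :
    Multiset.map lam Finset.univ.val = Multiset.map mu Finset.univ.val := by
  have hpoly : (∏ k, (Polynomial.X - Polynomial.C ((lam k : ℂ)))) =
      ∏ i, (Polynomial.X - Polynomial.C ((mu i : ℂ))) := by
    apply Polynomial.funext
    intro t
    simp only [Polynomial.eval_prod, Polynomial.eval_sub, Polynomial.eval_X, Polynomial.eval_C]
    exact h t
  have key : ∀ w : Fin d → ℝ, (∏ k, (Polynomial.X - Polynomial.C ((w k : ℂ)))).roots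
      = Multiset.map (fun k => ((w k : ℂ))) Finset.univ.val := by
    intro w
    have : (∏ k, (Polynomial.X - Polynomial.C ((w k : ℂ))))
        = ((Multiset.map (fun k => ((w k : ℂ))) Finset.univ.val).map
            (fun a => Polynomial.X - Polynomial.C a)).prod := by
      rw [Multiset.map_map]
      rfl
    rw [this, Polynomial.roots_multiset_prod_X_sub_C]
  have h2 : Multiset.map (fun k => ((lam k : ℂ))) Finset.univ.val
      = Multiset.map (fun k => ((mu k : ℂ))) Finset.univ.val := by
    rw [← key, ← key, hpoly]
  have h3 : Multiset.map (fun x : ℝ => (x : ℂ)) (Multiset.map lam Finset.univ.val)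
      = Multiset.map (fun x : ℝ => (x : ℂ)) (Multiset.map mu Finset.univ.val) := by
    rw [Multiset.map_map, Multiset.map_map]
    exact h2
  exact Multiset.map_injective Complex.ofReal_injective h3

theorem aux_entropy {d : ℕ} (ρ : Matrix (Fin d) (Fin d) ℂ) (e : Fin d → Fin d → ℂ)
    (lam : Fin d → ℝ) (he : OrthonormalFamily e)
    (hρ : ρ = ∑ k, (lam k : ℂ) • Matrix.vecMulVec (e k) (star (e k))) :
    vnEntropy ρ = -∑ k, lam k * Real.logb 2 (lam k) := by
  set V : Matrix (Fin d) (Fin d) ℂ := Matrix.of fun a k => e k a with hVdef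
  have hV1 : Vᴴ * V = 1 := by
    ext k l
    simpa [Matrix.mul_apply, Matrix.conjTranspose_apply, Matrix.one_apply, hVdef] using he k l
  have hV : V * Vᴴ = 1 := mul_eq_one_comm.mp hV1
  have hρV : ρ = V * Matrix.diagonal (fun k => (lam k : ℂ)) * Vᴴ := by
    rw [hρ]
    ext a b
    rw [Matrix.mul_assoc]
    simp only [Matrix.mul_apply, Matrix.diagonal_apply, Matrix.sum_apply, Matrix.smul_apply,
      Matrix.vecMulVec_apply, Matrix.conjTranspose_apply, Matrix.of_apply, Pi.star_apply,
      smul_eq_mul, Complex.star_def, ite_mul, zero_mul, Finset.sum_ite_eq,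
      Finset.mem_univ, if_true]
    refine Finset.sum_congr rfl fun k _ => ?_
    simp only [hVdef, Matrix.of_apply]
    ring
  have hherm : ρ.IsHermitian := by
    rw [hρV]
    have hD : (Matrix.diagonal (fun k => (lam k : ℂ)))ᴴ = Matrix.diagonal (fun k => (lam k : ℂ)) := by
      ext i j
      by_cases h : i = j
      · subst h
        simp [Matrix.conjTranspose_apply, Matrix.diagonal_apply_eq, Complex.conj_ofReal]
      · simp [Matrix.conjTranspose_apply, Matrix.diagonal_apply_ne, h, Ne.symm h]
    unfold Matrix.IsHermitian
    rw [Matrix.conjTranspose_mul, Matrix.conjTranspose_mul, Matrix.conjTranspose_conjTranspose,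
      hD, Matrix.mul_assoc]
  have hdet : ∀ t : ℂ, (∏ k, (t - (lam k : ℂ))) = ∏ i, (t - (hherm.eigenvalues i : ℂ)) := by
    intro t
    have hdiag : ∀ w : Fin d → ℂ, t • (1 : Matrix (Fin d) (Fin d) ℂ) - Matrix.diagonal w
        = Matrix.diagonal (fun k => t - w k) := by
      intro w
      rw [← Matrix.diagonal_one, ← Matrix.diagonal_smul, Matrix.diagonal_sub]
      funext k
      simp
    have h1 : Matrix.det (t • (1 : Matrix (Fin d) (Fin d) ℂ) - ρ) = ∏ k, (t - (lam k : ℂ)) := by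
      rw [hρV, aux_det_conj V _ hV t, hdiag, Matrix.det_diagonal]
    have hU : (hherm.eigenvectorUnitary : Matrix (Fin d) (Fin d) ℂ)
        * (hherm.eigenvectorUnitary : Matrix (Fin d) (Fin d) ℂ)ᴴ = 1 := by
      rw [← Matrix.star_eq_conjTranspose]
      exact (Matrix.mem_unitaryGroup_iff).mp (hherm.eigenvectorUnitary).2
    have h2 : Matrix.det (t • (1 : Matrix (Fin d) (Fin d) ℂ) - ρ)
        = ∏ i, (t - (hherm.eigenvalues i : ℂ)) := by
      conv_lhs => rw [hherm.spectral_theorem, Unitary.conjStarAlgAut_apply]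
      rw [Matrix.star_eq_conjTranspose] at *
      rw [aux_det_conj _ _ hU t, hdiag, Matrix.det_diagonal]
      rfl
    rw [← h1, h2]
  have hms := aux_multiset lam hherm.eigenvalues hdet
  have hsum : ∀ g : ℝ → ℝ, ∑ k, g (lam k) = ∑ i, g (hherm.eigenvalues i) := by
    intro g
    have e1 : ∑ k, g (lam k) = (Multiset.map g (Multiset.map lam Finset.univ.val)).sum := by
      rw [Multiset.map_map]; rfl
    have e2 : ∑ i, g (hherm.eigenvalues i)
        = (Multiset.map g (Multiset.map hherm.eigenvalues Finset.univ.val)).sum := by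
      rw [Multiset.map_map]; rfl
    rw [e1, e2, hms]
  rw [vnEntropy, dif_pos hherm]
  congr 1
  exact (hsum (fun x => x * Real.logb 2 x)).symm

theorem tvec_orth {d n : ℕ} (e : Fin d → Fin d → ℂ) (he : OrthonormalFamily e)
    (f g : Fin n → Fin d) :
    (∑ a, (starRingEnd ℂ) (tvec e f a) * tvec e g a) = if f = g then 1 else 0 := by
  have h1 : ∀ a : Fin n → Fin d, (starRingEnd ℂ) (tvec e f a) * tvec e g a
      = ∏ i, ((starRingEnd ℂ) (e (f i) (a i)) * e (g i) (a i)) := by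
    intro a; rw [tvec, tvec, map_prod, Finset.prod_mul_distrib]
  simp_rw [h1]
  rw [← Fintype.prod_sum (fun i x => (starRingEnd ℂ) (e (f i) x) * e (g i) x)]
  have he' : ∀ k l, (∑ a, (starRingEnd ℂ) (e k a) * e l a) = if k = l then 1 else 0 := he
  simp_rw [he']
  by_cases h : f = g
  · subst h; simp
  · rw [if_neg h]
    obtain ⟨i, hi⟩ := Function.ne_iff.mp h
    exact Finset.prod_eq_zero (Finset.mem_univ i) (by simp [hi])

theorem Pm_mul {d n : ℕ} (e : Fin d → Fin d → ℂ) (he : OrthonormalFamily e)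
    (f g : Fin n → Fin d) :
    Pm e f * Pm e g = if f = g then Pm e f else 0 := by
  ext a b
  rw [Matrix.mul_apply]
  have h1 : ∀ c, (Pm e f) a c * (Pm e g) c b
      = (tvec e f a * (starRingEnd ℂ) (tvec e g b)) *
          ((starRingEnd ℂ) (tvec e f c) * tvec e g c) := by
    intro c; simp only [Pm, Matrix.of_apply]; ring
  simp_rw [h1]
  rw [← Finset.mul_sum, tvec_orth e he f g]
  by_cases h : f = g
  · subst h; simp [Pm]
  · simp [h]

theorem typicalProj_eq_sum {d n : ℕ} (e : Fin d → Fin d → ℂ) (lam : Fin d → ℝ) (δ : ℝ) :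
    typicalProj e lam n δ = ∑ f ∈ typicalSet lam n δ, Pm e f := by
  refine Finset.sum_congr rfl fun f _ => ?_
  ext a b
  show (∏ i, e (f i) (a i)) * ∏ i, (starRingEnd ℂ) (e (f i) (b i))
      = tvec e f a * (starRingEnd ℂ) (tvec e f b)
  simp only [tvec, map_prod]

theorem tensorPow_eq_sum {d n : ℕ} (ρ : Matrix (Fin d) (Fin d) ℂ) (e : Fin d → Fin d → ℂ)
    (lam : Fin d → ℝ)
    (hρ : ρ = ∑ k, (lam k : ℂ) • Matrix.vecMulVec (e k) (star (e k))) :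
    tensorPow ρ n = ∑ g : Fin n → Fin d, (((∏ i, lam (g i)) : ℝ) : ℂ) • Pm e g := by
  ext a b
  rw [tensorPow, Matrix.of_apply]
  have hent : ∀ i : Fin n, ρ (a i) (b i)
      = ∑ k, (lam k : ℂ) * (e k (a i) * (starRingEnd ℂ) (e k (b i))) := by
    intro i
    rw [hρ]
    simp only [Matrix.sum_apply, Matrix.smul_apply, Matrix.vecMulVec_apply, Pi.star_apply,
      smul_eq_mul, Complex.star_def]
  simp_rw [hent]
  rw [Fintype.prod_sum (fun i k => (lam k : ℂ) * (e k (a i) * (starRingEnd ℂ) (e k (b i))))]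
  rw [Matrix.sum_apply]
  refine Finset.sum_congr rfl fun g _ => ?_
  simp only [Matrix.smul_apply, Pm, Matrix.of_apply, tvec, smul_eq_mul, map_prod,
    Complex.ofReal_prod, Finset.prod_mul_distrib]
  try ring

theorem sandwich_eq {d n : ℕ} (ρ : Matrix (Fin d) (Fin d) ℂ) (e : Fin d → Fin d → ℂ)
    (lam : Fin d → ℝ) (δ : ℝ) (he : OrthonormalFamily e)
    (hρ : ρ = ∑ k, (lam k : ℂ) • Matrix.vecMulVec (e k) (star (e k))) :
    typicalProj e lam n δ * tensorPow ρ n * typicalProj e lam n δ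
      = ∑ f ∈ typicalSet lam n δ, (((∏ i, lam (f i)) : ℝ) : ℂ) • Pm e f := by
  rw [typicalProj_eq_sum, tensorPow_eq_sum ρ e lam hρ]
  have step1 : (∑ f ∈ typicalSet lam n δ, Pm e f)
      * (∑ g : Fin n → Fin d, (((∏ i, lam (g i)) : ℝ) : ℂ) • Pm e g)
      = ∑ f ∈ typicalSet lam n δ, (((∏ i, lam (f i)) : ℝ) : ℂ) • Pm e f := by
    rw [Finset.sum_mul_sum]
    refine Finset.sum_congr rfl fun f hf => ?_
    rw [Finset.sum_eq_single f]
    · rw [mul_smul_comm, Pm_mul e he, if_pos rfl]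
    · intro g _ hg
      rw [mul_smul_comm, Pm_mul e he, if_neg (Ne.symm hg), smul_zero]
    · intro h; exact absurd (Finset.mem_univ f) h
  rw [step1, Finset.sum_mul]
  refine Finset.sum_congr rfl fun f hf => ?_
  rw [smul_mul_assoc, Finset.mul_sum]
  rw [Finset.sum_eq_single_of_mem f hf]
  · rw [Pm_mul e he, if_pos rfl]
  · intro h _ hh
    rw [Pm_mul e he, if_neg (fun hfh => hh hfh.symm)]

theorem stmt_6 {d : ℕ} (ρ : Matrix (Fin d) (Fin d) ℂ)
    (e : Fin d → Fin d → ℂ) (lam : Fin d → ℝ)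
    (he : OrthonormalFamily e) (hlam : ∀ k, 0 < lam k)
    (hρ : ρ = ∑ k, (lam k : ℂ) • Matrix.vecMulVec (e k) (star (e k)))
    (hρtr : ρ.trace = 1)
    (δ : ℝ) (hδ : 0 < δ) (n : ℕ) (hn : 1 ≤ n) :
    loewnerLE
      (((2 : ℝ) ^ (-(n : ℝ) * (vnEntropy ρ + (∑ k, |Real.logb 2 (lam k)|) * δ))) •
        typicalProj e lam n δ)
      (typicalProj e lam n δ * tensorPow ρ n * typicalProj e lam n δ) ∧
    loewnerLE
      (typicalProj e lam n δ * tensorPow ρ n * typicalProj e lam n δ)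
      (((2 : ℝ) ^ (-(n : ℝ) * (vnEntropy ρ - (∑ k, |Real.logb 2 (lam k)|) * δ))) •
        typicalProj e lam n δ) := by
  have hS := aux_entropy ρ e lam he hρ
  set c : ℝ := ∑ k, |Real.logb 2 (lam k)| with hc
  set α : ℝ := (2 : ℝ) ^ (-(n : ℝ) * (vnEntropy ρ + c * δ)) with hα
  set γ : ℝ := (2 : ℝ) ^ (-(n : ℝ) * (vnEntropy ρ - c * δ)) with hγ
  have hsw := sandwich_eq (n := n) ρ e lam δ he hρ
  have hbound : ∀ f ∈ typicalSet lam n δ,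
      α ≤ ∏ i, lam (f i) ∧ (∏ i, lam (f i)) ≤ γ := by
    intro f hf
    have := aux_scalar lam hlam δ n f hf
    rw [hα, hγ, hS, hc]
    exact this
  have hsm : ∀ (r : ℝ) (A : Matrix (Fin n → Fin d) (Fin n → Fin d) ℂ),
      r • A = (r : ℂ) • A := by
    intro r A
    ext a b
    simp [Matrix.smul_apply, Complex.real_smul]
  have hcomb : ∀ (r : ℝ) (cf : ℝ) (A : Matrix (Fin n → Fin d) (Fin n → Fin d) ℂ),
      (cf : ℂ) • A - r • A = ((cf - r : ℝ) : ℂ) • A := by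
    intro r cf A
    rw [hsm r A, show ((cf - r : ℝ) : ℂ) = (cf : ℂ) - (r : ℂ) by push_cast; ring, sub_smul]
  have hcomb2 : ∀ (r : ℝ) (cf : ℝ) (A : Matrix (Fin n → Fin d) (Fin n → Fin d) ℂ),
      r • A - (cf : ℂ) • A = ((r - cf : ℝ) : ℂ) • A := by
    intro r cf A
    rw [hsm r A, show ((r - cf : ℝ) : ℂ) = (r : ℂ) - (cf : ℂ) by push_cast; ring, sub_smul]
  constructor
  · unfold loewnerLE
    have heq : typicalProj e lam n δ * tensorPow ρ n * typicalProj e lam n δ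
        - α • typicalProj e lam n δ
        = ∑ f ∈ typicalSet lam n δ, (((∏ i, lam (f i)) - α : ℝ) : ℂ) • Pm e f := by
      rw [hsw, typicalProj_eq_sum, Finset.smul_sum, ← Finset.sum_sub_distrib]
      exact Finset.sum_congr rfl fun f _ => hcomb α _ _
    rw [heq]
    exact aux_psd_sum _ _ _ (fun f hf => sub_nonneg.mpr (hbound f hf).1)
  · unfold loewnerLE
    have heq : γ • typicalProj e lam n δ
        - typicalProj e lam n δ * tensorPow ρ n * typicalProj e lam n δ
        = ∑ f ∈ typicalSet lam n δ, ((γ - (∏ i, lam (f i)) : ℝ) : ℂ) • Pm e f := by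
      rw [hsw, typicalProj_eq_sum, Finset.smul_sum, ← Finset.sum_sub_distrib]
      exact Finset.sum_congr rfl fun f _ => hcomb2 γ _ _
    rw [heq]
    exact aux_psd_sum _ _ _ (fun f hf => sub_nonneg.mpr (hbound f hf).2)
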